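/- arXiv:1101.5982 — 3 statements merged into one kernel-verified Lean document; each statement's English description precedes it below -/
import Mathlib

section
/- Let T be a Tambara functor on a finite group G, and let I ⊆ T(G/e) be a G-invariant ideal of the ring T(G/e). Define 𝔦_I(X) = ⋂_{γ ∈ G-Set(G/e, X)} (γ*)⁻¹(I) for each finite G-set X. Then 𝔦_I is an ideal of T with 𝔦_I(G/e) = I, and it is the largest ideal 𝔦 of T satisfying 𝔦(G/e) = I. -/
set_option autoImplicit false

/-! Finite G-sets -/

structure GSet (G : Type) [Group G] : Type 1 where
  carrier : Type
  [mulAction : MulAction G carrier]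
  [finite : Finite carrier]

attribute [instance] GSet.mulAction GSet.finite

/-- Equivariant maps of finite `G`-sets. -/
structure GSetHom {G : Type} [Group G] (X Y : GSet G) : Type where
  toFun : X.carrier → Y.carrier
  map_smul : ∀ (g : G) (x : X.carrier), toFun (g • x) = g • toFun x

namespace GSetHom

variable {G : Type} [Group G]

def id (X : GSet G) : GSetHom X X := ⟨fun x => x, fun _ _ => rfl⟩

def comp {X Y Z : GSet G} (g : GSetHom Y Z) (f : GSetHom X Y) : GSetHom X Z :=
  ⟨fun x => g.toFun (f.toFun x), fun a x => by
    show g.toFun (f.toFun (a • x)) = a • g.toFun (f.toFun x)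
    rw [f.map_smul, g.map_smul]⟩

end GSetHom

namespace GSet

variable {G : Type} [Group G]

/-- Binary disjoint union of `G`-sets. -/
def sum (X Y : GSet G) : GSet G where
  carrier := X.carrier ⊕ Y.carrier

def inl (X Y : GSet G) : GSetHom X (X.sum Y) := ⟨Sum.inl, fun _ _ => rfl⟩

def inr (X Y : GSet G) : GSetHom Y (X.sum Y) := ⟨Sum.inr, fun _ _ => rfl⟩

instance : MulAction G Empty where
  smul _ x := x.elim
  one_smul x := x.elim
  mul_smul _ _ x := x.elim

/-- The empty `G`-set. -/
def empty (G : Type) [Group G] : GSet G where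
  carrier := Empty

/-- Finite disjoint unions of `G`-sets. -/
def sigma {n : ℕ} (Xs : Fin n → GSet G) : GSet G where
  carrier := Σ i, (Xs i).carrier

def sigmaIncl {n : ℕ} (Xs : Fin n → GSet G) (i : Fin n) : GSetHom (Xs i) (sigma Xs) :=
  ⟨fun x => ⟨i, x⟩, fun _ _ => rfl⟩

/-- The canonical pullback of two `G`-maps. -/
def pullback {X Y Z : GSet G} (f : GSetHom X Z) (g : GSetHom Y Z) : GSet G where
  carrier := { q : X.carrier × Y.carrier // f.toFun q.1 = g.toFun q.2 }
  mulAction :=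
  { smul := fun a q => ⟨a • q.val, by
      show f.toFun (a • q.val.1) = g.toFun (a • q.val.2)
      rw [f.map_smul, g.map_smul, q.property]⟩
    one_smul := fun q => Subtype.ext (one_smul G q.val)
    mul_smul := fun a b q => Subtype.ext (mul_smul a b q.val) }

def pbFst {X Y Z : GSet G} (f : GSetHom X Z) (g : GSetHom Y Z) :
    GSetHom (pullback f g) X := ⟨fun q => q.val.1, fun _ _ => rfl⟩

def pbSnd {X Y Z : GSet G} (f : GSetHom X Z) (g : GSetHom Y Z) :
    GSetHom (pullback f g) Y := ⟨fun q => q.val.2, fun _ _ => rfl⟩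

/-- The complement of the image of a `G`-map, as a `G`-set. -/
def compl {X Y : GSet G} (f : GSetHom X Y) : GSet G where
  carrier := { y : Y.carrier // ∀ x, f.toFun x ≠ y }
  mulAction :=
  { smul := fun g y => ⟨g • y.val, fun x h => y.property (g⁻¹ • x) (by
      rw [f.map_smul, h, inv_smul_smul])⟩
    one_smul := fun y => Subtype.ext (one_smul G y.val)
    mul_smul := fun a b y => Subtype.ext (mul_smul a b y.val) }

def complIncl {X Y : GSet G} (f : GSetHom X Y) : GSetHom (compl f) Y :=
  ⟨fun y => y.val, fun _ _ => rfl⟩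

/-- Points of Tambara's dependent product `Π_f(A)`: pairs `(y, σ)` of a point `y : Y`
and a section `σ` of `p` on the fiber `f⁻¹(y)` (encoded as an `Option`-valued function
supported exactly on the fiber). -/
def PiProp {X Y A : GSet G} (f : GSetHom X Y) (p : GSetHom A X)
    (s : Y.carrier × (X.carrier → Option A.carrier)) : Prop :=
  (∀ x, (s.2 x).isSome = true ↔ f.toFun x = s.1) ∧
  (∀ x a, s.2 x = some a → p.toFun a = x)

def PiCar {X Y A : GSet G} (f : GSetHom X Y) (p : GSetHom A X) : Type :=
  { s : Y.carrier × (X.carrier → Option A.carrier) // PiProp f p s }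

instance optionFinite {α : Type} [Finite α] : Finite (Option α) :=
  Finite.of_equiv _ (Equiv.optionEquivSumPUnit.{0,0} α).symm

instance piFinite {X Y A : GSet G} (f : GSetHom X Y) (p : GSetHom A X) :
    Finite (PiCar f p) := by
  unfold PiCar; infer_instance

def piSmul {X Y A : GSet G} (f : GSetHom X Y) (p : GSetHom A X) (g : G)
    (s : PiCar f p) : PiCar f p :=
  ⟨(g • s.val.1, fun x => (s.val.2 (g⁻¹ • x)).map (g • ·)), by
    constructor
    · intro x
      rw [Option.isSome_map, s.property.1 (g⁻¹ • x), f.map_smul]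
      constructor
      · intro h; rw [← h, smul_inv_smul]
      · intro h; rw [h, inv_smul_smul]
    · intro x a ha
      rcases Option.map_eq_some_iff.mp ha with ⟨b, hb, rfl⟩
      rw [p.map_smul, s.property.2 _ _ hb, smul_inv_smul]⟩

instance piAction {X Y A : GSet G} (f : GSetHom X Y) (p : GSetHom A X) :
    MulAction G (PiCar f p) where
  smul := piSmul f p
  one_smul s := by
    apply Subtype.ext
    refine Prod.ext (one_smul G s.val.1) ?_
    funext x
    show (s.val.2 ((1:G)⁻¹ • x)).map ((1:G) • ·) = s.val.2 x
    rw [inv_one, one_smul]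
    cases h : s.val.2 x <;> simp [one_smul]
  mul_smul a b s := by
    apply Subtype.ext
    refine Prod.ext (mul_smul a b s.val.1) ?_
    funext x
    show (s.val.2 ((a * b)⁻¹ • x)).map ((a * b) • ·)
        = ((s.val.2 (b⁻¹ • (a⁻¹ • x))).map (b • ·)).map (a • ·)
    rw [Option.map_map, mul_inv_rev, mul_smul]
    cases h : s.val.2 (b⁻¹ • a⁻¹ • x) <;> simp [mul_smul, Function.comp]

/-- Tambara's dependent product `Π_f(A)` as a `G`-set. -/
def piObj {X Y A : GSet G} (f : GSetHom X Y) (p : GSetHom A X) : GSet G where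
  carrier := PiCar f p

/-- The projection `π : Π_f(A) → Y`. -/
def piPr {X Y A : GSet G} (f : GSetHom X Y) (p : GSetHom A X) :
    GSetHom (piObj f p) Y := ⟨fun s => s.val.1, fun _ _ => rfl⟩

theorem optGet {α : Type} {o : Option α} {a : α} (h : o = some a) :
    ∀ hs : o.isSome = true, o.get hs = a := by subst h; intro _; rfl

/-- The evaluation map `λ : X ×_Y Π_f(A) → A`, `(x, (y, σ)) ↦ σ(x)`. -/
def piEval {X Y A : GSet G} (f : GSetHom X Y) (p : GSetHom A X) :
    GSetHom (pullback f (piPr f p)) A where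
  toFun z := (z.val.2.val.2 z.val.1).get (by
    rw [z.val.2.property.1 z.val.1]; exact z.property)
  map_smul g z := by
    have hs : (z.val.2.val.2 z.val.1).isSome = true := by
      rw [z.val.2.property.1 z.val.1]; exact z.property
    obtain ⟨a, ha⟩ := Option.isSome_iff_exists.mp hs
    have h1 : z.val.2.val.2 z.val.1 = some a := ha
    have h2 : (g • z).val.2.val.2 (g • z).val.1 = some (g • a) := by
      show (z.val.2.val.2 (g⁻¹ • (g • z.val.1))).map (g • ·) = some (g • a)
      rw [inv_smul_smul, h1]; rfl
    simp only [optGet h2, optGet h1]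

end GSet

namespace GSet

/-- A transitive (nonempty) finite `G`-set. -/
def IsTransitive {G : Type} [Group G] (X : GSet G) : Prop :=
  Nonempty X.carrier ∧ MulAction.IsPretransitive G X.carrier

end GSet

/-! Tambara functors -/

/-- The underlying system of commutative rings of a Tambara functor. -/
structure TamData (G : Type) [Group G] : Type 1 where
  obj : GSet G → Type
  ring : ∀ X, CommRing (obj X)

attribute [instance] TamData.ring

/-- A Tambara functor on the finite group `G`: a system of commutative rings `obj X`
indexed by finite `G`-sets, together with restrictions `res`, additive transfers `tr`
and multiplicative transfers `nm`, functorial, additive, satisfying the Mackey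
base-change conditions, the projection formula, and Tambara's distributive law. -/
structure TambaraFunctor (G : Type) [Group G] extends TamData G where
  res : ∀ {X Y : GSet G}, GSetHom X Y → (obj Y →+* obj X)
  tr : ∀ {X Y : GSet G}, GSetHom X Y → (obj X →+ obj Y)
  nm : ∀ {X Y : GSet G}, GSetHom X Y → (obj X →* obj Y)
  res_id : ∀ {X : GSet G} (x : obj X), res (GSetHom.id X) x = x
  res_comp : ∀ {X Y Z : GSet G} (f : GSetHom X Y) (g : GSetHom Y Z) (z : obj Z),
    res f (res g z) = res (g.comp f) z
  tr_id : ∀ {X : GSet G} (x : obj X), tr (GSetHom.id X) x = x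
  tr_comp : ∀ {X Y Z : GSet G} (f : GSetHom X Y) (g : GSetHom Y Z) (x : obj X),
    tr g (tr f x) = tr (g.comp f) x
  nm_id : ∀ {X : GSet G} (x : obj X), nm (GSetHom.id X) x = x
  nm_comp : ∀ {X Y Z : GSet G} (f : GSetHom X Y) (g : GSetHom Y Z) (x : obj X),
    nm g (nm f x) = nm (g.comp f) x
  /-- additivity on binary disjoint unions -/
  add_bij : ∀ X Y : GSet G, Function.Bijective
    (fun t : obj (X.sum Y) => (res (GSet.inl X Y) t, res (GSet.inr X Y) t))
  /-- `T(∅)` is the zero ring -/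
  empty_subsingleton : ∀ x y : obj (GSet.empty G), x = y
  /-- Mackey base change for the additive transfer -/
  tr_bc : ∀ {X Y Z : GSet G} (f : GSetHom X Z) (g : GSetHom Y Z) (x : obj X),
    res g (tr f x) = tr (GSet.pbSnd f g) (res (GSet.pbFst f g) x)
  /-- Mackey base change for the multiplicative transfer -/
  nm_bc : ∀ {X Y Z : GSet G} (f : GSetHom X Z) (g : GSetHom Y Z) (x : obj X),
    res g (nm f x) = nm (GSet.pbSnd f g) (res (GSet.pbFst f g) x)
  /-- the projection formula -/
  proj_formula : ∀ {X Y : GSet G} (f : GSetHom X Y) (a : obj X) (b : obj Y),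
    tr f (a * res f b) = tr f a * b
  /-- the norm of zero is the additive transfer of `1` from the complement of the image -/
  nm_zero : ∀ {X Y : GSet G} (f : GSetHom X Y), nm f (0 : obj X) = tr (GSet.complIncl f) 1
  /-- Tambara's distributive law, via the canonical exponential diagram on `Π_f(A)` -/
  distrib : ∀ {X Y A : GSet G} (f : GSetHom X Y) (p : GSetHom A X) (a : obj A),
    nm f (tr p a) = tr (GSet.piPr f p)
      (nm (GSet.pbSnd f (GSet.piPr f p)) (res (GSet.piEval f p) a))

namespace TambaraFunctor

variable {G : Type} [Group G]

/-- `f_!(x) = f_•(x) - f_•(0)`. -/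
def shriek (T : TambaraFunctor G) {X Y : GSet G} (f : GSetHom X Y) (x : T.obj X) :
    T.obj Y := T.nm f x - T.nm f 0

end TambaraFunctor

/-- A morphism of Tambara functors: a family of ring homomorphisms natural with respect
to restrictions, additive transfers and multiplicative transfers. -/
structure TamHom {G : Type} [Group G] (T S : TambaraFunctor G) where
  app : ∀ X : GSet G, T.obj X →+* S.obj X
  app_res : ∀ {X Y : GSet G} (f : GSetHom X Y) (y : T.obj Y),
    app X (T.res f y) = S.res f (app Y y)
  app_tr : ∀ {X Y : GSet G} (f : GSetHom X Y) (x : T.obj X),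
    app Y (T.tr f x) = S.tr f (app X x)
  app_nm : ∀ {X Y : GSet G} (f : GSetHom X Y) (x : T.obj X),
    app Y (T.nm f x) = S.nm f (app X x)

namespace TambaraFunctor

variable {G : Type} [Group G]

/-- An ideal of a Tambara functor: a family of ideals closed under restrictions,
additive transfers, and satisfying `f_•(𝔦(X)) ⊆ f_•(0) + 𝔦(Y)`
(equivalently, closed under `f_!`). -/
structure IsIdeal (T : TambaraFunctor G) (I : ∀ X : GSet G, Ideal (T.obj X)) : Prop where
  res_mem : ∀ {X Y : GSet G} (f : GSetHom X Y) {y : T.obj Y}, y ∈ I Y → T.res f y ∈ I X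
  tr_mem : ∀ {X Y : GSet G} (f : GSetHom X Y) {x : T.obj X}, x ∈ I X → T.tr f x ∈ I Y
  shriek_mem : ∀ {X Y : GSet G} (f : GSetHom X Y) {x : T.obj X},
    x ∈ I X → T.shriek f x ∈ I Y

/-- The ideal generated by a family of subsets: the intersection of all ideals
containing it. -/
def gen (T : TambaraFunctor G) (S : ∀ X : GSet G, Set (T.obj X)) (X : GSet G) :
    Ideal (T.obj X) :=
  ⨅ (I : ∀ Y : GSet G, Ideal (T.obj Y)) (_ : T.IsIdeal I) (_ : ∀ Y, S Y ⊆ ↑(I Y)), I X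

/-- The family of subsets consisting of the single element `a ∈ T(A)`. -/
def single (T : TambaraFunctor G) (A : GSet G) (a : T.obj A) (X : GSet G) :
    Set (T.obj X) := { x | ∃ h : A = X, h ▸ a = x }

/-- The principal ideal `⟨a⟩` generated by `a ∈ T(A)`. -/
def principal (T : TambaraFunctor G) (A : GSet G) (a : T.obj A) :
    ∀ X : GSet G, Ideal (T.obj X) := T.gen (T.single A a)

/-- The defining set of the product of two ideals. -/
def mulSet (T : TambaraFunctor G) (I J : ∀ X : GSet G, Ideal (T.obj X)) (X : GSet G) :
    Set (T.obj X) :=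
  { x | ∃ (A : GSet G) (p : GSetHom A X) (a b : T.obj A),
      a ∈ I A ∧ b ∈ J A ∧ x = T.tr p (a * b) }

/-- The product of two ideals of a Tambara functor. -/
def mulIdl (T : TambaraFunctor G) (I J : ∀ X : GSet G, Ideal (T.obj X)) (X : GSet G) :
    Ideal (T.obj X) := Ideal.span (T.mulSet I J X)

/-- Iterated products of ideals. -/
def mulMulti (T : TambaraFunctor G) :
    List (∀ X : GSet G, Ideal (T.obj X)) → ∀ X : GSet G, Ideal (T.obj X)
  | [] => fun _ => ⊤
  | I :: ls => T.mulIdl I (T.mulMulti ls)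

/-- A prime ideal of a Tambara functor. -/
structure IsPrime (T : TambaraFunctor G) (P : ∀ X : GSet G, Ideal (T.obj X)) : Prop where
  isIdeal : T.IsIdeal P
  ne_top : ∃ X : GSet G, P X ≠ ⊤
  mem_or_mem : ∀ {X Y : GSet G}, X.IsTransitive → Y.IsTransitive →
    ∀ {a : T.obj X} {b : T.obj Y},
      (∀ Z : GSet G, T.mulIdl (T.principal X a) (T.principal Y b) Z ≤ P Z) →
      a ∈ P X ∨ b ∈ P Y

/-- A maximal ideal of a Tambara functor. -/
structure IsMaximal (T : TambaraFunctor G) (M : ∀ X : GSet G, Ideal (T.obj X)) : Prop where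
  isIdeal : T.IsIdeal M
  ne_top : ∃ X : GSet G, M X ≠ ⊤
  eq_of_le : ∀ K : ∀ X : GSet G, Ideal (T.obj X), T.IsIdeal K →
    (∀ X, M X ≤ K X) → (K = M ∨ ∀ X, K X = ⊤)

end TambaraFunctor

namespace GSet

/-- The `G`-set `G/e`, i.e. `G` with the left regular action. -/
def regular (G : Type) [Group G] [Finite G] : GSet G where
  carrier := G

/-- Right multiplication `G/e → G/e`, an equivariant map. -/
def rightMul {G : Type} [Group G] [Finite G] (g : G) :
    GSetHom (regular G) (regular G) :=
  ⟨fun x => (id x : G) * g, fun a x => mul_assoc a x g⟩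

end GSet

/-! Every `G`-set over `G/e` is free: splitting off the orbit of a point over `1` leaves a copy
of `G/e` and a smaller `G`-set over `G/e`. After Mackey base change along `γ : G/e → Y`, the
transfer `f_+ x` therefore becomes a sum, and the norm `f_• x` a product, in which each copy of
`G/e` contributes a restriction of `x` along some `G/e → X`; these lie in `I` when `x ∈ 𝔦_I(X)`.
For `f_!` a single factor of the product suffices, and that factor vanishes at `x = 0`.
Maximality is closure of `𝔦` under restriction, and `𝔦_I(G/e) = I` because every endomorphism
of `G/e` is a right multiplication, under which `I` is invariant. -/

namespace GSetHom

variable {G : Type} [Group G]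

@[ext]
theorem ext {X Y : GSet G} {f g : GSetHom X Y} (h : ∀ x, f.toFun x = g.toFun x) : f = g := by
  cases f; cases g; congr; funext x; exact h x

end GSetHom

namespace GSet

variable {G : Type} [Group G]

def prod (X Y : GSet G) : GSet G where
  carrier := X.carrier × Y.carrier

def fst (X Y : GSet G) : GSetHom (X.prod Y) X := ⟨Prod.fst, fun _ _ => rfl⟩

def snd (X Y : GSet G) : GSetHom (X.prod Y) Y := ⟨Prod.snd, fun _ _ => rfl⟩

def sub (X : GSet G) (Q : X.carrier → Prop) (hQ : ∀ (g : G) (x : X.carrier), Q x → Q (g • x)) :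
    GSet G where
  carrier := { x // Q x }
  mulAction :=
  { smul := fun g x => ⟨g • x.val, hQ g x.val x.property⟩
    one_smul := fun x => Subtype.ext (one_smul G x.val)
    mul_smul := fun a b x => Subtype.ext (mul_smul a b x.val) }

def subIncl (X : GSet G) (Q : X.carrier → Prop) (hQ : ∀ (g : G) (x : X.carrier), Q x → Q (g • x)) :
    GSetHom (X.sub Q hQ) X := ⟨Subtype.val, fun _ _ => rfl⟩

instance isEmpty_pullback_inl_inr (X Y : GSet G) :
    IsEmpty (pullback (inl X Y) (inr X Y)).carrier :=
  ⟨fun q => Sum.inl_ne_inr q.property⟩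

instance isEmpty_pullback_inr_inl (X Y : GSet G) :
    IsEmpty (pullback (inr X Y) (inl X Y)).carrier :=
  ⟨fun q => Sum.inr_ne_inl q.property⟩

section Split

variable (X : GSet G) {Q : X.carrier → Prop}

theorem stable_not (hQ : ∀ (g : G) (x : X.carrier), Q x → Q (g • x)) :
    ∀ (g : G) (x : X.carrier), ¬Q x → ¬Q (g • x) :=
  fun g x hx hgx => hx (by simpa using hQ g⁻¹ _ hgx)

variable (hQ : ∀ (g : G) (x : X.carrier), Q x → Q (g • x))

def subSum : GSetHom ((X.sub Q hQ).sum (X.sub (¬Q ·) (X.stable_not hQ))) X :=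
  ⟨Sum.elim Subtype.val Subtype.val, by rintro g (x | x) <;> rfl⟩

open Classical in
noncomputable def subSumInv : GSetHom X ((X.sub Q hQ).sum (X.sub (¬Q ·) (X.stable_not hQ))) where
  toFun := (Equiv.sumCompl Q).symm
  map_smul g x := (Equiv.sumCompl Q).injective <| by
    rw [Equiv.apply_symm_apply]
    exact (congrArg (g • ·) ((Equiv.sumCompl Q).apply_symm_apply x).symm).trans
      ((X.subSum hQ).map_smul g ((Equiv.sumCompl Q).symm x)).symm

open Classical in
theorem subSum_comp_subSumInv : (X.subSum hQ).comp (X.subSumInv hQ) = GSetHom.id X :=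
  GSetHom.ext (Equiv.sumCompl Q).apply_symm_apply

open Classical in
theorem subSumInv_comp_subSum : (X.subSumInv hQ).comp (X.subSum hQ) = GSetHom.id _ :=
  GSetHom.ext (Equiv.sumCompl Q).symm_apply_apply

end Split

section Orbit

variable {X : GSet G}

theorem orbit_stable (x : X.carrier) :
    ∀ (g : G) (y : X.carrier), y ∈ MulAction.orbit G x → g • y ∈ MulAction.orbit G x :=
  fun g _ hy => MulAction.mem_orbit_of_mem_orbit g hy

abbrev orbit (X : GSet G) (x : X.carrier) : GSet G :=
  X.sub (· ∈ MulAction.orbit G x) (orbit_stable x)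

variable [Finite G]

-- `(id g : G)` retypes a point of `(regular G).carrier` as a group element.
def orbitMap (x : X.carrier) : GSetHom (regular G) (X.orbit x) :=
  ⟨fun g => ⟨(id g : G) • x, MulAction.mem_orbit x _⟩, fun a g => Subtype.ext (mul_smul a g x)⟩

theorem exists_apply_eq_one (h : GSetHom X (regular G)) (p : X.carrier) :
    ∃ x : X.carrier, h.toFun x = (1 : G) :=
  ⟨(id (h.toFun p) : G)⁻¹ • p, by rw [h.map_smul]; exact inv_mul_cancel (id (h.toFun p) : G)⟩

variable {x : X.carrier} {h : GSetHom X (regular G)}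

theorem comp_orbitMap (hx : h.toFun x = (1 : G)) :
    (h.comp (X.subIncl _ (orbit_stable x))).comp (orbitMap x) = GSetHom.id (regular G) := by
  ext g
  show h.toFun ((id g : G) • x) = g
  rw [h.map_smul, hx]
  exact mul_one (id g : G)

theorem orbitMap_comp (hx : h.toFun x = (1 : G)) :
    (orbitMap x).comp (h.comp (X.subIncl _ (orbit_stable x))) = GSetHom.id (X.orbit x) := by
  ext ⟨_, g, rfl⟩
  apply Subtype.ext
  show (id (h.toFun (g • x)) : G) • x = g • x
  rw [h.map_smul, hx]
  exact congrArg (· • x) (mul_one g)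

theorem exists_eq_rightMul (γ : GSetHom (regular G) (regular G)) : ∃ g : G, γ = rightMul g :=
  ⟨id (γ.toFun (1 : G)), GSetHom.ext fun g =>
    (congrArg γ.toFun (mul_one (id g : G)).symm).trans (γ.map_smul (id g : G) (1 : G))⟩

end Orbit

end GSet

namespace TambaraFunctor

variable {G : Type} [Group G] (T : TambaraFunctor G)

/-- Instantiated by `tr` and `nm`, so that what follows from functoriality at identities and
Mackey base change alone is proved once for both. -/
structure BaseChange (F : ∀ {X Y : GSet G}, GSetHom X Y → T.obj X → T.obj Y) : Prop where
  map_id : ∀ {X : GSet G} (x : T.obj X), F (GSetHom.id X) x = x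
  res_map : ∀ {X Y Z : GSet G} (f : GSetHom X Z) (g : GSetHom Y Z) (x : T.obj X),
    T.res g (F f x) = F (GSet.pbSnd f g) (T.res (GSet.pbFst f g) x)

theorem baseChange_tr : T.BaseChange (fun f x => T.tr f x) := ⟨T.tr_id, T.tr_bc⟩

theorem baseChange_nm : T.BaseChange (fun f x => T.nm f x) := ⟨T.nm_id, T.nm_bc⟩

theorem subsingleton_obj (E : GSet G) [IsEmpty E.carrier] : Subsingleton (T.obj E) := by
  let u : GSetHom E (GSet.empty G) := ⟨isEmptyElim, fun _ => isEmptyElim⟩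
  let v : GSetHom (GSet.empty G) E := ⟨Empty.elim, fun _ x => x.elim⟩
  have hvu : v.comp u = GSetHom.id E := GSetHom.ext isEmptyElim
  refine ⟨fun x y => ?_⟩
  rw [← T.res_id x, ← T.res_id y, ← hvu, ← T.res_comp, ← T.res_comp,
    T.empty_subsingleton (T.res v x)]

section BaseChange

variable {T} {F : ∀ {X Y : GSet G}, GSetHom X Y → T.obj X → T.obj Y}

theorem BaseChange.map_pbSnd_res_pbFst (hF : T.BaseChange F) {X Z : GSet G}
    (f g : GSetHom X Z) (hfg : ∀ x y, f.toFun x = g.toFun y ↔ x = y) (t : T.obj X) :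
    F (GSet.pbSnd f g) (T.res (GSet.pbFst f g) t) = t := by
  -- The pullback of `f` and `g` is cut out of `X × X` by a predicate equal to that of the
  -- pullback of `id` and `id`, where base change reads `t = F π₂ (res π₁ t)`.
  have hdiag : ∀ (Q : X.carrier × X.carrier → Prop) (hQ : _), Q = (fun q => q.1 = q.2) →
      F ((GSet.snd X X).comp ((X.prod X).subIncl Q hQ))
        (T.res ((GSet.fst X X).comp ((X.prod X).subIncl Q hQ)) t) = t := by
    rintro Q hQ rfl
    have h := hF.res_map (GSetHom.id X) (GSetHom.id X) t
    rw [T.res_id, hF.map_id] at h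
    exact h.symm
  exact hdiag _ (fun a q hq => ((a • ⟨q, hq⟩ : (GSet.pullback f g).carrier)).property)
    (funext fun q => propext (hfg q.1 q.2))

theorem BaseChange.res_map_of_injective (hF : T.BaseChange F) {X Y : GSet G}
    (f : GSetHom X Y) (hf : Function.Injective f.toFun) (x : T.obj X) : T.res f (F f x) = x := by
  rw [hF.res_map]
  exact hF.map_pbSnd_res_pbFst f f (fun _ _ => hf.eq_iff) x

theorem BaseChange.res_map_eq_of_isEmpty (hF : T.BaseChange F) {X Y Z : GSet G}
    (f : GSetHom X Z) (g : GSetHom Y Z) [IsEmpty (GSet.pullback f g).carrier] (a b : T.obj X) :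
    T.res g (F f a) = T.res g (F f b) := by
  have := T.subsingleton_obj (GSet.pullback f g)
  rw [hF.res_map, hF.res_map, Subsingleton.elim (T.res _ a) (T.res _ b)]

theorem BaseChange.map_eq_res_of_inverse (hF : T.BaseChange F) {X Y : GSet G}
    (e : GSetHom X Y) (e' : GSetHom Y X) (he : e'.comp e = GSetHom.id X)
    (he' : e.comp e' = GSetHom.id Y) (x : T.obj X) :
    F e x = T.res e' x := by
  have hleft : ∀ a, e'.toFun (e.toFun a) = a := fun a => congrArg (fun k => k.toFun a) he
  have he_inj : Function.Injective e.toFun := fun a b hab => by rw [← hleft a, hab, hleft b]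
  calc F e x = T.res e' (T.res e (F e x)) := by rw [T.res_comp, he', T.res_id]
    _ = T.res e' x := by rw [hF.res_map_of_injective e he_inj x]

theorem BaseChange.map_subSum_res_subSum (hF : T.BaseChange F) {X : GSet G}
    {Q : X.carrier → Prop} (hQ : ∀ (g : G) (x : X.carrier), Q x → Q (g • x)) (x : T.obj X) :
    F (X.subSum hQ) (T.res (X.subSum hQ) x) = x := by
  rw [hF.map_eq_res_of_inverse _ _ (X.subSumInv_comp_subSum hQ) (X.subSum_comp_subSumInv hQ),
    T.res_comp, X.subSum_comp_subSumInv hQ, T.res_id]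

theorem BaseChange.map_orbit_eq_res [Finite G] (hF : T.BaseChange F) {X : GSet G}
    {x : X.carrier} {h : GSetHom X (GSet.regular G)} (hx : h.toFun x = (1 : G))
    (v : T.obj (X.orbit x)) :
    F (h.comp (X.subIncl _ (GSet.orbit_stable x))) v = T.res (GSet.orbitMap x) v :=
  hF.map_eq_res_of_inverse _ _ (GSet.orbitMap_comp hx) (GSet.comp_orbitMap hx) v

end BaseChange

theorem tr_inl_add_tr_inr (X Y : GSet G) (t : T.obj (X.sum Y)) :
    T.tr (GSet.inl X Y) (T.res (GSet.inl X Y) t)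
      + T.tr (GSet.inr X Y) (T.res (GSet.inr X Y) t) = t := by
  refine (T.add_bij X Y).injective (Prod.ext ?_ ?_) <;> dsimp only
  · rw [map_add, T.baseChange_tr.res_map_of_injective _ Sum.inl_injective,
      T.baseChange_tr.res_map_eq_of_isEmpty (GSet.inr X Y) (GSet.inl X Y) _ 0, map_zero, map_zero,
      add_zero]
  · rw [map_add, T.baseChange_tr.res_map_of_injective _ Sum.inr_injective,
      T.baseChange_tr.res_map_eq_of_isEmpty (GSet.inl X Y) (GSet.inr X Y) _ 0, map_zero, map_zero,
      zero_add]

theorem nm_inl_mul_nm_inr (X Y : GSet G) (t : T.obj (X.sum Y)) :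
    T.nm (GSet.inl X Y) (T.res (GSet.inl X Y) t)
      * T.nm (GSet.inr X Y) (T.res (GSet.inr X Y) t) = t := by
  refine (T.add_bij X Y).injective (Prod.ext ?_ ?_) <;> dsimp only
  · rw [map_mul, T.baseChange_nm.res_map_of_injective _ Sum.inl_injective,
      T.baseChange_nm.res_map_eq_of_isEmpty (GSet.inr X Y) (GSet.inl X Y) _ 1, map_one, map_one,
      mul_one]
  · rw [map_mul, T.baseChange_nm.res_map_of_injective _ Sum.inr_injective,
      T.baseChange_nm.res_map_eq_of_isEmpty (GSet.inl X Y) (GSet.inr X Y) _ 1, map_one, map_one,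
      one_mul]

section Split

variable {X Y : GSet G} {Q : X.carrier → Prop} (hQ : ∀ (g : G) (x : X.carrier), Q x → Q (g • x))

theorem tr_eq_add_of_stable (f : GSetHom X Y) (x : T.obj X) :
    T.tr f x = T.tr (f.comp (X.subIncl Q hQ)) (T.res (X.subIncl Q hQ) x)
      + T.tr (f.comp (X.subIncl _ (X.stable_not hQ)))
          (T.res (X.subIncl _ (X.stable_not hQ)) x) := by
  conv_lhs => rw [← T.baseChange_tr.map_subSum_res_subSum hQ x,
    ← T.tr_inl_add_tr_inr _ _ (T.res (X.subSum hQ) x)]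
  rw [map_add, map_add, T.tr_comp, T.tr_comp, T.tr_comp, T.tr_comp, T.res_comp, T.res_comp]
  rfl

theorem nm_eq_mul_of_stable (f : GSetHom X Y) (x : T.obj X) :
    T.nm f x = T.nm (f.comp (X.subIncl Q hQ)) (T.res (X.subIncl Q hQ) x)
      * T.nm (f.comp (X.subIncl _ (X.stable_not hQ)))
          (T.res (X.subIncl _ (X.stable_not hQ)) x) := by
  conv_lhs => rw [← T.baseChange_nm.map_subSum_res_subSum hQ x,
    ← T.nm_inl_mul_nm_inr _ _ (T.res (X.subSum hQ) x)]
  rw [map_mul, map_mul, T.nm_comp, T.nm_comp, T.nm_comp, T.nm_comp, T.res_comp, T.res_comp]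
  rfl

end Split

section ExtendIdeal

variable [Finite G]

def extendIdeal (I : Ideal (T.obj (GSet.regular G))) (X : GSet G) : Ideal (T.obj X) :=
  ⨅ γ : GSetHom (GSet.regular G) X, I.comap (T.res γ)

variable {T} {I : Ideal (T.obj (GSet.regular G))}

theorem mem_extendIdeal {X : GSet G} {x : T.obj X} :
    x ∈ T.extendIdeal I X ↔ ∀ γ : GSetHom (GSet.regular G) X, T.res γ x ∈ I := by
  simp only [extendIdeal, Ideal.mem_iInf, Ideal.mem_comap]

theorem res_mem_extendIdeal {X Y : GSet G} (f : GSetHom X Y) {y : T.obj Y}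
    (hy : y ∈ T.extendIdeal I Y) : T.res f y ∈ T.extendIdeal I X :=
  mem_extendIdeal.2 fun γ => by rw [T.res_comp]; exact mem_extendIdeal.1 hy _

theorem tr_mem_of_mem_extendIdeal {P : GSet G} (h : GSetHom P (GSet.regular G)) {u : T.obj P}
    (hu : u ∈ T.extendIdeal I P) : T.tr h u ∈ I := by
  induction hn : Nat.card P.carrier using Nat.strong_induction_on generalizing P with
  | _ n ih =>
    rcases isEmpty_or_nonempty P.carrier with hP | hP
    · have := T.subsingleton_obj P
      rw [Subsingleton.elim u 0, map_zero]
      exact I.zero_mem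
    obtain ⟨s, hs⟩ := GSet.exists_apply_eq_one h hP.some
    rw [T.tr_eq_add_of_stable (GSet.orbit_stable s), T.baseChange_tr.map_orbit_eq_res hs,
      T.res_comp]
    refine I.add_mem (mem_extendIdeal.1 hu _) (ih _ ?_ _ (res_mem_extendIdeal _ hu) rfl)
    exact hn ▸ Finite.card_subtype_lt (not_not.2 (MulAction.mem_orbit_self s))

theorem shriek_mem_of_mem_extendIdeal {P : GSet G} (h : GSetHom P (GSet.regular G))
    {u : T.obj P} (hu : u ∈ T.extendIdeal I P) : T.shriek h u ∈ I := by
  rcases isEmpty_or_nonempty P.carrier with hP | hP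
  · have := T.subsingleton_obj P
    rw [shriek, Subsingleton.elim u 0, sub_self]
    exact I.zero_mem
  obtain ⟨s, hs⟩ := GSet.exists_apply_eq_one h hP.some
  have hsplit : ∀ v, T.nm h v = T.res ((P.subIncl _ (GSet.orbit_stable s)).comp (GSet.orbitMap s)) v
      * T.nm (h.comp (P.subIncl _ (P.stable_not (GSet.orbit_stable s))))
          (T.res (P.subIncl _ (P.stable_not (GSet.orbit_stable s))) v) := fun v => by
    rw [T.nm_eq_mul_of_stable (GSet.orbit_stable s), T.baseChange_nm.map_orbit_eq_res hs,
      T.res_comp]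
  rw [shriek, hsplit u, hsplit 0, map_zero, zero_mul, sub_zero]
  exact I.mul_mem_right _ (mem_extendIdeal.1 hu _)

theorem isIdeal_extendIdeal (I : Ideal (T.obj (GSet.regular G))) :
    T.IsIdeal (T.extendIdeal I) where
  res_mem f _ hy := res_mem_extendIdeal f hy
  tr_mem f x hx := mem_extendIdeal.2 fun γ => by
    rw [T.tr_bc]
    exact tr_mem_of_mem_extendIdeal _ (res_mem_extendIdeal _ hx)
  shriek_mem f x hx := mem_extendIdeal.2 fun γ => by
    rw [shriek, map_sub, T.nm_bc, T.nm_bc, map_zero]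
    exact shriek_mem_of_mem_extendIdeal _ (res_mem_extendIdeal _ hx)

theorem extendIdeal_regular (hI : ∀ (g : G), ∀ a ∈ I, T.res (GSet.rightMul g) a ∈ I) :
    T.extendIdeal I (GSet.regular G) = I := by
  refine le_antisymm (fun x hx => ?_) (fun x hx => mem_extendIdeal.2 fun γ => ?_)
  · simpa only [T.res_id] using mem_extendIdeal.1 hx (GSetHom.id _)
  · obtain ⟨g, rfl⟩ := GSet.exists_eq_rightMul γ
    exact hI g x hx

theorem le_extendIdeal {K : ∀ X : GSet G, Ideal (T.obj X)} (hK : T.IsIdeal K) (X : GSet G) :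
    K X ≤ T.extendIdeal (K (GSet.regular G)) X :=
  fun _ hx => mem_extendIdeal.2 fun γ => hK.res_mem γ hx

end ExtendIdeal

end TambaraFunctor

/-- for a `G`-invariant ideal `I ⊆ T(G/e)`, the family
`𝔦_I(X) = ⋂_{γ : G/e → X} (γ*)⁻¹(I)` is an ideal of `T` with `𝔦_I(G/e) = I`, and it is the
largest ideal of `T` whose value at `G/e` is `I`. -/
theorem invariant_ideal_extends (G : Type) [Group G] [Finite G] (T : TambaraFunctor G)
    (I : Ideal (T.obj (GSet.regular G)))
    (hI : ∀ (g : G), ∀ a ∈ I, T.res (GSet.rightMul g) a ∈ I) :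
    T.IsIdeal (fun X => ⨅ γ : GSetHom (GSet.regular G) X, I.comap (T.res γ)) ∧
    (⨅ γ : GSetHom (GSet.regular G) (GSet.regular G), I.comap (T.res γ)) = I ∧
    (∀ K : ∀ X : GSet G, Ideal (T.obj X), T.IsIdeal K → K (GSet.regular G) = I →
      ∀ X : GSet G, K X ≤ ⨅ γ : GSetHom (GSet.regular G) X, I.comap (T.res γ)) :=
  ⟨T.isIdeal_extendIdeal I, T.extendIdeal_regular hI,
    fun _ hK hKI X => hKI ▸ T.le_extendIdeal hK X⟩
end

section
/- Let T be a Tambara functor on a finite group G and a ∈ T(A) for a finite G-set A. Then the principal ideal ⟨a⟩ satisfies, for every finite G-set X: ⟨a⟩(X) = { u_+(c · v_! w*(a)) : X ←u− C ←v− D −w→ A are G-maps, c ∈ T(C) }. -/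
set_option autoImplicit false

/-!
Every element `u_+(c · v_!(w^* a))` is built from `a` by the ideal operations, so it suffices
to show that these elements form an ideal. Factoring `v` through its image as `i ∘ v₀` gives
`v_! = i_+ ∘ (v₀)_•`, so by the projection formula one may assume `v` surjective and replace
`v_!` by the norm `v_•`. In that form, sums come from disjoint unions of diagrams, products and
restrictions from the projection formula and base change, and `f_!(u_+ x)` is rewritten by the
distributive law as `π_+ Λ_!(ev^* x)`, where `Λ_!` again factors as a transfer after a norm.
-/

namespace GSetHom

variable {G : Type} [Group G]

theorem exists_comp_eq_id_of_bijective {X Y : GSet G} (f : GSetHom X Y)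
    (hf : Function.Bijective f.toFun) : ∃ s : GSetHom Y X, f.comp s = id Y :=
  ⟨⟨Function.surjInv hf.2, fun g y => hf.1 (by
      rw [Function.surjInv_eq hf.2, f.map_smul, Function.surjInv_eq hf.2])⟩,
    ext fun y => Function.surjInv_eq hf.2 y⟩

def ofIsEmpty {X : GSet G} (Y : GSet G) [IsEmpty X.carrier] : GSetHom X Y :=
  ⟨isEmptyElim, fun _ x => isEmptyElim x⟩

def sumElim {C C' X : GSet G} (u : GSetHom C X) (u' : GSetHom C' X) :
    GSetHom (C.sum C') X :=
  ⟨Sum.elim u.toFun u'.toFun, fun g s => by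
    cases s with
    | inl c => exact u.map_smul g c
    | inr c => exact u'.map_smul g c⟩

theorem sumElim_comp_inl {C C' X : GSet G} (u : GSetHom C X) (u' : GSetHom C' X) :
    (sumElim u u').comp (GSet.inl C C') = u := rfl

theorem sumElim_comp_inr {C C' X : GSet G} (u : GSetHom C X) (u' : GSetHom C' X) :
    (sumElim u u').comp (GSet.inr C C') = u' := rfl

def sumMap {D D' C C' : GSet G} (v : GSetHom D C) (v' : GSetHom D' C') :
    GSetHom (D.sum D') (C.sum C') :=
  sumElim ((GSet.inl C C').comp v) ((GSet.inr C C').comp v')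

theorem pbSnd_surjective {D C E : GSet G} {v : GSetHom D C} (h : GSetHom E C)
    (hv : Function.Surjective v.toFun) : Function.Surjective (GSet.pbSnd v h).toFun :=
  fun e => by
    obtain ⟨d, hd⟩ := hv (h.toFun e)
    exact ⟨⟨(d, e), hd⟩, rfl⟩

theorem bijective_sumElim_complIncl {D C : GSet G} {i : GSetHom D C}
    (hi : Function.Injective i.toFun) :
    Function.Bijective (sumElim i (GSet.complIncl i)).toFun := by
  constructor
  · rintro (d | e) (d' | e') h
    · exact congrArg Sum.inl (hi h)
    · exact (e'.property d h).elim
    · exact (e.property d' h.symm).elim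
    · exact congrArg Sum.inr (Subtype.ext h)
  · intro c
    by_cases hc : ∃ d, i.toFun d = c
    · obtain ⟨d, hd⟩ := hc
      exact ⟨Sum.inl d, hd⟩
    · exact ⟨Sum.inr ⟨c, fun d hd => hc ⟨d, hd⟩⟩, rfl⟩

end GSetHom

namespace GSet

variable {G : Type} [Group G]

/-- `pullback f g` is definitionally `subProd X Y (fun q => f.toFun q.1 = g.toFun q.2) _`. -/
def subProd (X Y : GSet G) (p : X.carrier × Y.carrier → Prop)
    (hp : ∀ (a : G) (q : X.carrier × Y.carrier), p q → p (a • q)) : GSet G where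
  carrier := { q : X.carrier × Y.carrier // p q }
  mulAction :=
  { smul := fun a q => ⟨a • q.val, hp a q.val q.property⟩
    one_smul := fun q => Subtype.ext (one_smul G q.val)
    mul_smul := fun a b q => Subtype.ext (mul_smul a b q.val) }

def subProdFst (X Y : GSet G) (p : X.carrier × Y.carrier → Prop)
    (hp : ∀ (a : G) (q : X.carrier × Y.carrier), p q → p (a • q)) :
    GSetHom (subProd X Y p hp) X := ⟨fun q => q.val.1, fun _ _ => rfl⟩

def subProdSnd (X Y : GSet G) (p : X.carrier × Y.carrier → Prop)
    (hp : ∀ (a : G) (q : X.carrier × Y.carrier), p q → p (a • q)) :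
    GSetHom (subProd X Y p hp) Y := ⟨fun q => q.val.2, fun _ _ => rfl⟩

theorem pullback_rel_smul {X Y Z : GSet G} (f : GSetHom X Z) (g : GSetHom Y Z) (a : G)
    (q : X.carrier × Y.carrier) (h : f.toFun q.1 = g.toFun q.2) :
    f.toFun (a • q).1 = g.toFun (a • q).2 := by
  show f.toFun (a • q.1) = g.toFun (a • q.2)
  rw [f.map_smul, g.map_smul, h]

instance : IsEmpty (empty G).carrier := inferInstanceAs (IsEmpty Empty)

def range {D C : GSet G} (v : GSetHom D C) : GSet G where
  carrier := { c : C.carrier // ∃ d, v.toFun d = c }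
  mulAction :=
  { smul := fun g c => ⟨g • c.val, by
      obtain ⟨d, hd⟩ := c.property
      exact ⟨g • d, by rw [v.map_smul, hd]⟩⟩
    one_smul := fun c => Subtype.ext (one_smul G c.val)
    mul_smul := fun g h c => Subtype.ext (mul_smul g h c.val) }

def rangeIncl {D C : GSet G} (v : GSetHom D C) : GSetHom (range v) C :=
  ⟨Subtype.val, fun _ _ => rfl⟩

def rangeFactorization {D C : GSet G} (v : GSetHom D C) : GSetHom D (range v) :=
  ⟨fun d => ⟨v.toFun d, d, rfl⟩, fun g d => Subtype.ext (v.map_smul g d)⟩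

theorem rangeIncl_comp_rangeFactorization {D C : GSet G} (v : GSetHom D C) :
    (rangeIncl v).comp (rangeFactorization v) = v := rfl

theorem rangeIncl_injective {D C : GSet G} (v : GSetHom D C) :
    Function.Injective (rangeIncl v).toFun := fun _ _ h => Subtype.ext h

theorem rangeFactorization_surjective {D C : GSet G} (v : GSetHom D C) :
    Function.Surjective (rangeFactorization v).toFun := by
  rintro ⟨c, d, rfl⟩
  exact ⟨d, rfl⟩

end GSet

namespace TambaraFunctor

variable {G : Type} [Group G] (T : TambaraFunctor G)

open GSet GSetHom

theorem subsingleton_obj_of_isEmpty {P : GSet G} [IsEmpty P.carrier] :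
    Subsingleton (T.obj P) := by
  have hid : (ofIsEmpty P).comp (ofIsEmpty (GSet.empty G)) = GSetHom.id P :=
    GSetHom.ext fun q => isEmptyElim q
  refine ⟨fun x y => ?_⟩
  rw [← T.res_id x, ← T.res_id y, ← hid, ← T.res_comp, ← T.res_comp,
    T.empty_subsingleton (T.res (ofIsEmpty P) x)]

theorem res_injective_of_bijective {P Q : GSet G} {m : GSetHom P Q}
    (hm : Function.Bijective m.toFun) : Function.Injective (T.res m) := by
  obtain ⟨s, hs⟩ := exists_comp_eq_id_of_bijective m hm
  intro z z' h
  have h' := congrArg (T.res s) h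
  rwa [T.res_comp, T.res_comp, hs, T.res_id, T.res_id] at h'

theorem apply_res_pullback_congr {X Y Z₁ Z₂ : GSet G}
    (F : ∀ {P : GSet G}, GSetHom P Y → T.obj P → T.obj Y)
    (f₁ : GSetHom X Z₁) (g₁ : GSetHom Y Z₁) (f₂ : GSetHom X Z₂) (g₂ : GSetHom Y Z₂)
    (h : ∀ x y, f₁.toFun x = g₁.toFun y ↔ f₂.toFun x = g₂.toFun y) (x : T.obj X) :
    F (pbSnd f₁ g₁) (T.res (pbFst f₁ g₁) x) = F (pbSnd f₂ g₂) (T.res (pbFst f₂ g₂) x) := by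
  have key : ∀ (p₁ p₂ : X.carrier × Y.carrier → Prop) (h₁ h₂), p₁ = p₂ →
      F (subProdSnd X Y p₁ h₁) (T.res (subProdFst X Y p₁ h₁) x)
        = F (subProdSnd X Y p₂ h₂) (T.res (subProdFst X Y p₂ h₂) x) := by
    rintro p _ h₁ h₂ rfl
    rfl
  exact key _ _ (pullback_rel_smul f₁ g₁) (pullback_rel_smul f₂ g₂)
    (funext fun q => propext (h q.1 q.2))

theorem pullback_self_rel_iff {D C : GSet G} {i : GSetHom D C}
    (hi : Function.Injective i.toFun) (x y : D.carrier) :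
    i.toFun x = i.toFun y ↔ (GSetHom.id D).toFun x = (GSetHom.id D).toFun y :=
  ⟨fun h => hi h, congrArg i.toFun⟩

theorem res_tr_of_injective {D C : GSet G} {i : GSetHom D C}
    (hi : Function.Injective i.toFun) (y : T.obj D) : T.res i (T.tr i y) = y := by
  rw [T.tr_bc, T.apply_res_pullback_congr (fun f => T.tr f) i i (GSetHom.id D)
    (GSetHom.id D) (pullback_self_rel_iff hi), ← T.tr_bc, T.tr_id, T.res_id]

theorem res_nm_of_injective {D C : GSet G} {i : GSetHom D C}
    (hi : Function.Injective i.toFun) (y : T.obj D) : T.res i (T.nm i y) = y := by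
  rw [T.nm_bc, T.apply_res_pullback_congr (fun f => T.nm f) i i (GSetHom.id D)
    (GSetHom.id D) (pullback_self_rel_iff hi), ← T.nm_bc, T.nm_id, T.res_id]

theorem nm_res_of_bijective {P Q : GSet G} {m : GSetHom P Q}
    (hm : Function.Bijective m.toFun) (z : T.obj Q) : T.nm m (T.res m z) = z :=
  T.res_injective_of_bijective hm (T.res_nm_of_injective hm.1 _)

theorem nm_bc_of_bijective {X Y Z Q : GSet G} (f : GSetHom X Z) (g : GSetHom Y Z)
    (p : GSetHom Q X) (q : GSetHom Q Y) (m : GSetHom Q (pullback f g))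
    (hm : Function.Bijective m.toFun) (hp : (pbFst f g).comp m = p)
    (hq : (pbSnd f g).comp m = q) (x : T.obj X) :
    T.res g (T.nm f x) = T.nm q (T.res p x) := by
  rw [T.nm_bc, ← hp, ← hq, ← T.res_comp, ← T.nm_comp, T.nm_res_of_bijective hm]

theorem res_tr_eq_zero_of_disjoint {X Y Z : GSet G} {f : GSetHom X Z} {g : GSetHom Y Z}
    (hfg : ∀ x y, f.toFun x ≠ g.toFun y) (x : T.obj X) : T.res g (T.tr f x) = 0 := by
  have : IsEmpty (pullback f g).carrier := ⟨fun q => hfg _ _ q.property⟩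
  have := T.subsingleton_obj_of_isEmpty (P := pullback f g)
  rw [T.tr_bc, Subsingleton.elim (T.res (pbFst f g) x) 0, map_zero]

theorem res_nm_eq_of_disjoint {X Y Z : GSet G} {f : GSetHom X Z} {g : GSetHom Y Z}
    (hfg : ∀ x y, f.toFun x ≠ g.toFun y) (x x' : T.obj X) :
    T.res g (T.nm f x) = T.res g (T.nm f x') := by
  have : IsEmpty (pullback f g).carrier := ⟨fun q => hfg _ _ q.property⟩
  have := T.subsingleton_obj_of_isEmpty (P := pullback f g)
  rw [T.nm_bc, T.nm_bc, Subsingleton.elim (T.res (pbFst f g) x)]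

section Sums

variable {C C' : GSet G}

theorem res_inl_tr_inr (x : T.obj C') : T.res (inl C C') (T.tr (inr C C') x) = 0 :=
  T.res_tr_eq_zero_of_disjoint (fun _ _ => Sum.inr_ne_inl) x

theorem res_inr_tr_inl (x : T.obj C) : T.res (inr C C') (T.tr (inl C C') x) = 0 :=
  T.res_tr_eq_zero_of_disjoint (fun _ _ => Sum.inl_ne_inr) x

theorem eq_tr_inl_add_tr_inr (t : T.obj (C.sum C')) :
    t = T.tr (inl C C') (T.res (inl C C') t) + T.tr (inr C C') (T.res (inr C C') t) := by
  refine (T.add_bij C C').injective (Prod.ext ?_ ?_)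
  · show _ = T.res (inl C C') (_ + _)
    rw [map_add, T.res_tr_of_injective Sum.inl_injective, res_inl_tr_inr, add_zero]
  · show _ = T.res (inr C C') (_ + _)
    rw [map_add, T.res_tr_of_injective Sum.inr_injective, res_inr_tr_inl, zero_add]

theorem tr_sumElim {X : GSet G} (u : GSetHom C X) (u' : GSetHom C' X)
    (t : T.obj (C.sum C')) :
    T.tr (sumElim u u') t = T.tr u (T.res (inl C C') t) + T.tr u' (T.res (inr C C') t) := by
  conv_lhs => rw [T.eq_tr_inl_add_tr_inr t]
  rw [map_add, T.tr_comp, T.tr_comp, sumElim_comp_inl, sumElim_comp_inr]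

theorem exists_res_inl_res_inr (x : T.obj C) (x' : T.obj C') :
    ∃ t, T.res (inl C C') t = x ∧ T.res (inr C C') t = x' := by
  obtain ⟨t, ht⟩ := (T.add_bij C C').2 (x, x')
  exact ⟨t, congrArg Prod.fst ht, congrArg Prod.snd ht⟩

variable {D D' : GSet G} (v : GSetHom D C) (v' : GSetHom D' C')

theorem res_inl_nm_sumMap (z : T.obj (D.sum D')) :
    T.res (inl C C') (T.nm (sumMap v v') z) = T.nm v (T.res (inl D D') z) := by
  let m : GSetHom D (pullback (sumMap v v') (inl C C')) :=
    ⟨fun d => ⟨(Sum.inl d, v.toFun d), rfl⟩,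
      fun g d => Subtype.ext (Prod.ext rfl (v.map_smul g d))⟩
  have hm : Function.Bijective m.toFun := by
    refine ⟨fun d d' h => Sum.inl_injective (congrArg (fun q => q.val.1) h), ?_⟩
    rintro ⟨⟨_ | _, c⟩, h⟩
    · exact ⟨_, Subtype.ext (Prod.ext rfl (Sum.inl_injective h))⟩
    · exact (Sum.inr_ne_inl h).elim
  exact T.nm_bc_of_bijective _ _ _ _ m hm rfl rfl z

theorem res_inr_nm_sumMap (z : T.obj (D.sum D')) :
    T.res (inr C C') (T.nm (sumMap v v') z) = T.nm v' (T.res (inr D D') z) := by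
  let m : GSetHom D' (pullback (sumMap v v') (inr C C')) :=
    ⟨fun d => ⟨(Sum.inr d, v'.toFun d), rfl⟩,
      fun g d => Subtype.ext (Prod.ext rfl (v'.map_smul g d))⟩
  have hm : Function.Bijective m.toFun := by
    refine ⟨fun d d' h => Sum.inr_injective (congrArg (fun q => q.val.1) h), ?_⟩
    rintro ⟨⟨_ | _, c⟩, h⟩
    · exact (Sum.inl_ne_inr h).elim
    · exact ⟨_, Subtype.ext (Prod.ext rfl (Sum.inr_injective h))⟩
  exact T.nm_bc_of_bijective _ _ _ _ m hm rfl rfl z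

end Sums

theorem nm_zero_of_surjective {D C : GSet G} {v : GSetHom D C}
    (hv : Function.Surjective v.toFun) : T.nm v 0 = 0 := by
  have : IsEmpty (compl v).carrier :=
    ⟨fun y => by obtain ⟨d, hd⟩ := hv y.val; exact y.property d hd⟩
  have := T.subsingleton_obj_of_isEmpty (P := compl v)
  rw [T.nm_zero, Subsingleton.elim (1 : T.obj (compl v)) 0, map_zero]

theorem shriek_eq_nm_of_surjective {D C : GSet G} {v : GSetHom D C}
    (hv : Function.Surjective v.toFun) (y : T.obj D) : T.shriek v y = T.nm v y := by
  rw [shriek, T.nm_zero_of_surjective hv, sub_zero]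

theorem eq_of_res_eq_of_bijective_sumElim {D E C : GSet G} {i : GSetHom D C}
    {k : GSetHom E C} (hik : Function.Bijective (sumElim i k).toFun) {z z' : T.obj C}
    (hi : T.res i z = T.res i z') (hk : T.res k z = T.res k z') : z = z' := by
  refine T.res_injective_of_bijective hik ((T.add_bij D E).injective (Prod.ext ?_ ?_))
  · show T.res _ (T.res _ z) = T.res _ (T.res _ z')
    rwa [T.res_comp, T.res_comp, sumElim_comp_inl]
  · show T.res _ (T.res _ z) = T.res _ (T.res _ z')
    rwa [T.res_comp, T.res_comp, sumElim_comp_inr]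

/-- Both sides restrict to `y` on `D` and to `0` on the complement of its image. -/
theorem shriek_eq_tr_of_injective {D C : GSet G} {i : GSetHom D C}
    (hi : Function.Injective i.toFun) (y : T.obj D) : T.shriek i y = T.tr i y := by
  have hdisj : ∀ d e, i.toFun d ≠ (complIncl i).toFun e := fun d e h => e.property d h
  refine T.eq_of_res_eq_of_bijective_sumElim (bijective_sumElim_complIncl hi) ?_ ?_
  · rw [shriek, map_sub, T.res_nm_of_injective hi, T.res_nm_of_injective hi,
      T.res_tr_of_injective hi, sub_zero]
  · rw [shriek, map_sub, T.res_nm_eq_of_disjoint hdisj y 0, sub_self,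
      T.res_tr_eq_zero_of_disjoint hdisj]

theorem shriek_eq_tr_nm_rangeFactorization {D C : GSet G} (v : GSetHom D C) (y : T.obj D) :
    T.shriek v y = T.tr (rangeIncl v) (T.nm (rangeFactorization v) y) := by
  rw [← T.shriek_eq_tr_of_injective (rangeIncl_injective v), shriek, shriek,
    ← T.nm_zero_of_surjective (rangeFactorization_surjective v), T.nm_comp, T.nm_comp,
    rangeIncl_comp_rangeFactorization]

theorem shriek_tr {X Y C : GSet G} (f : GSetHom X Y) (u : GSetHom C X) (x : T.obj C) :
    T.shriek f (T.tr u x)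
      = T.tr (piPr f u) (T.shriek (pbSnd f (piPr f u)) (T.res (piEval f u) x)) := by
  rw [shriek, shriek, ← map_zero (T.tr u), T.distrib, T.distrib, map_zero, ← map_sub]

theorem isIdeal_gen (S : ∀ X : GSet G, Set (T.obj X)) : T.IsIdeal (T.gen S) where
  res_mem f _ hy := by
    simp only [gen, Submodule.mem_iInf] at hy ⊢
    exact fun I hI hS => hI.res_mem f (hy I hI hS)
  tr_mem f _ hx := by
    simp only [gen, Submodule.mem_iInf] at hx ⊢
    exact fun I hI hS => hI.tr_mem f (hx I hI hS)
  shriek_mem f _ hx := by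
    simp only [gen, Submodule.mem_iInf] at hx ⊢
    exact fun I hI hS => hI.shriek_mem f (hx I hI hS)

theorem gen_le {S : ∀ X : GSet G, Set (T.obj X)} {I : ∀ X : GSet G, Ideal (T.obj X)}
    (hI : T.IsIdeal I) (hS : ∀ X, S X ⊆ I X) (X : GSet G) : T.gen S X ≤ I X :=
  iInf_le_of_le I (iInf_le_of_le hI (iInf_le_of_le hS le_rfl))

theorem self_mem_principal (A : GSet G) (a : T.obj A) : a ∈ T.principal A a A := by
  simp only [principal, gen, Submodule.mem_iInf]
  exact fun I _ hS => hS A ⟨rfl, rfl⟩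

theorem principal_le {A : GSet G} {a : T.obj A} {I : ∀ X : GSet G, Ideal (T.obj X)}
    (hI : T.IsIdeal I) (ha : a ∈ I A) (X : GSet G) : T.principal A a X ≤ I X :=
  T.gen_le hI (by rintro Y _ ⟨rfl, rfl⟩; exact ha) X

section NormForm

variable (A : GSet G) (a : T.obj A)

/-- For surjective `v` we have `v_• = v_!`, and unlike `v_!` the norm `v_•` is multiplicative
and composes with other norms. -/
def normSet (X : GSet G) : Set (T.obj X) :=
  { α | ∃ (C D : GSet G) (u : GSetHom C X) (v : GSetHom D C) (w : GSetHom D A)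
      (c : T.obj C), Function.Surjective v.toFun ∧ α = T.tr u (c * T.nm v (T.res w a)) }

variable {A a}

theorem zero_mem_normSet (X : GSet G) : (0 : T.obj X) ∈ T.normSet A a X :=
  ⟨GSet.empty G, GSet.empty G, ofIsEmpty X, GSetHom.id _, ofIsEmpty A, 0,
    Function.surjective_id, by rw [zero_mul, map_zero]⟩

theorem add_mem_normSet {X : GSet G} {α β : T.obj X} (hα : α ∈ T.normSet A a X)
    (hβ : β ∈ T.normSet A a X) : α + β ∈ T.normSet A a X := by
  obtain ⟨C, D, u, v, w, c, hv, rfl⟩ := hα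
  obtain ⟨C', D', u', v', w', c', hv', rfl⟩ := hβ
  obtain ⟨t, ht, ht'⟩ := T.exists_res_inl_res_inr c c'
  refine ⟨C.sum C', D.sum D', sumElim u u', sumMap v v', sumElim w w', t,
    hv.sumMap hv', ?_⟩
  rw [T.tr_sumElim, map_mul (T.res _), map_mul (T.res _), ht, ht', res_inl_nm_sumMap, res_inr_nm_sumMap,
    T.res_comp, T.res_comp, sumElim_comp_inl, sumElim_comp_inr]

theorem mul_mem_normSet {X : GSet G} (r : T.obj X) {α : T.obj X}
    (hα : α ∈ T.normSet A a X) : r * α ∈ T.normSet A a X := by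
  obtain ⟨C, D, u, v, w, c, hv, rfl⟩ := hα
  refine ⟨C, D, u, v, w, T.res u r * c, hv, ?_⟩
  rw [mul_comm r, ← T.proj_formula]
  congr 1
  ring

theorem res_mem_normSet {X Y : GSet G} (f : GSetHom X Y) {y : T.obj Y}
    (hy : y ∈ T.normSet A a Y) : T.res f y ∈ T.normSet A a X := by
  obtain ⟨C, D, u, v, w, c, hv, rfl⟩ := hy
  refine ⟨pullback u f, pullback v (pbFst u f), pbSnd u f, pbSnd v (pbFst u f),
    w.comp (pbFst v (pbFst u f)), T.res (pbFst u f) c, pbSnd_surjective _ hv, ?_⟩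
  rw [T.tr_bc, map_mul, T.nm_bc, T.res_comp]

theorem tr_mem_normSet {X Y : GSet G} (f : GSetHom X Y) {x : T.obj X}
    (hx : x ∈ T.normSet A a X) : T.tr f x ∈ T.normSet A a Y := by
  obtain ⟨C, D, u, v, w, c, hv, rfl⟩ := hx
  exact ⟨C, D, f.comp u, v, w, c, hv, by rw [T.tr_comp]⟩

/-- After the distributive law, `Λ_!` is split as `(range Λ ↪ ·)_+ ∘ (Λ onto its range)_•`;
the norm part is multiplicative and composes with `v_•`. -/
theorem shriek_mem_normSet {X Y : GSet G} (f : GSetHom X Y) {x : T.obj X}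
    (hx : x ∈ T.normSet A a X) : T.shriek f x ∈ T.normSet A a Y := by
  obtain ⟨C, D, u, v, w, c, hv, rfl⟩ := hx
  set Λ := pbSnd f (piPr f u)
  set ev := piEval f u
  rw [T.shriek_tr, map_mul, T.nm_bc v ev, T.res_comp, T.shriek_eq_tr_nm_rangeFactorization,
    map_mul, T.nm_comp, T.tr_comp]
  exact ⟨range Λ, pullback v ev, (piPr f u).comp (rangeIncl Λ),
    (rangeFactorization Λ).comp (pbSnd v ev), w.comp (pbFst v ev),
    T.nm (rangeFactorization Λ) (T.res ev c),
    (rangeFactorization_surjective Λ).comp (pbSnd_surjective ev hv), rfl⟩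

variable (A a)

def normIdeal (X : GSet G) : Ideal (T.obj X) where
  carrier := T.normSet A a X
  zero_mem' := T.zero_mem_normSet X
  add_mem' := T.add_mem_normSet
  smul_mem' := T.mul_mem_normSet

theorem isIdeal_normIdeal : T.IsIdeal (T.normIdeal A a) where
  res_mem := T.res_mem_normSet
  tr_mem := T.tr_mem_normSet
  shriek_mem := T.shriek_mem_normSet

theorem self_mem_normIdeal : a ∈ T.normIdeal A a A :=
  ⟨A, A, GSetHom.id A, GSetHom.id A, GSetHom.id A, 1, Function.surjective_id, by
    rw [T.res_id, T.nm_id, one_mul, T.tr_id]⟩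

theorem normSet_eq (X : GSet G) :
    T.normSet A a X = { α | ∃ (C D : GSet G) (u : GSetHom C X) (v : GSetHom D C)
      (w : GSetHom D A) (c : T.obj C), α = T.tr u (c * T.shriek v (T.res w a)) } := by
  ext α
  constructor
  · rintro ⟨C, D, u, v, w, c, hv, rfl⟩
    exact ⟨C, D, u, v, w, c, by rw [T.shriek_eq_nm_of_surjective hv]⟩
  · rintro ⟨C, D, u, v, w, c, rfl⟩
    refine ⟨range v, D, u.comp (rangeIncl v), rangeFactorization v, w,
      T.res (rangeIncl v) c, rangeFactorization_surjective v, ?_⟩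
    rw [T.shriek_eq_tr_nm_rangeFactorization, mul_comm c, ← T.proj_formula, ← T.tr_comp,
      mul_comm]

end NormForm

end TambaraFunctor

theorem principal_ideal_eq_general (G : Type) [Group G] (T : TambaraFunctor G)
    (A : GSet G) (a : T.obj A) (X : GSet G) :
    (T.principal A a X : Set (T.obj X)) =
      { α | ∃ (C D : GSet G) (u : GSetHom C X) (v : GSetHom D C) (w : GSetHom D A)
          (c : T.obj C), α = T.tr u (c * T.shriek v (T.res w a)) } := by
  apply subset_antisymm
  · rw [← T.normSet_eq]
    exact T.principal_le (T.isIdeal_normIdeal A a) (T.self_mem_normIdeal A a) X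
  · rintro _ ⟨C, D, u, v, w, c, rfl⟩
    have hP : T.IsIdeal (T.principal A a) := T.isIdeal_gen _
    exact hP.tr_mem u (Ideal.mul_mem_left _ c
      (hP.shriek_mem v (hP.res_mem w (T.self_mem_principal A a))))

/-- explicit description of the principal ideal `⟨a⟩`:
`⟨a⟩(X) = { u_+(c · v_! w*(a)) }` over diagrams `X ← C ← D → A`. -/
theorem principal_ideal_eq (G : Type) [Group G] [Finite G] (T : TambaraFunctor G)
    (A : GSet G) (a : T.obj A) (X : GSet G) :
    (T.principal A a X : Set (T.obj X)) =
      { α | ∃ (C D : GSet G) (u : GSetHom C X) (v : GSetHom D C) (w : GSetHom D A)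
          (c : T.obj C), α = T.tr u (c * T.shriek v (T.res w a)) } :=
  principal_ideal_eq_general G T A a X
end

section
/- Let T be a Tambara functor on a finite group G. If 𝔦, 𝔧 ⊆ T are coprime ideals (i.e., 𝔦 + 𝔧 = T), then 𝔦𝔧 = 𝔦 ∩ 𝔧, and in fact (𝔦𝔧)(X) = 𝔦(X)·𝔧(X) (the ordinary product of ideals in T(X)) for every finite G-set X. Consequently, if 𝔦_1, …, 𝔦_ℓ are pairwise coprime ideals of T, the projections induce an isomorphism of Tambara functors T/(𝔦_1⋯𝔦_ℓ) ≅ T/𝔦_1 × ⋯ × T/𝔦_ℓ. -/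
set_option autoImplicit false

/-! The product of ideals is generated by transfers `p_+(ab)`, so it lies below every
transfer-closed ideal containing the products `ab`, and above the levelwise product
`𝔦(X)𝔧(X)` (take `p = id`). For coprime ideals the levelwise product already equals the
levelwise intersection, which squeezes `𝔦𝔧` in between; iterating gives the same
squeeze for `𝔦₁⋯𝔦ₗ`, and the Chinese remainder theorem follows from the ring case. -/

namespace TambaraFunctor

variable {G : Type} [Group G] (T : TambaraFunctor G)

def TrClosed (K : ∀ X : GSet G, Ideal (T.obj X)) : Prop :=
  ∀ {X Y : GSet G} (f : GSetHom X Y) {x : T.obj X}, x ∈ K X → T.tr f x ∈ K Y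

variable {T} {I J K : ∀ X : GSet G, Ideal (T.obj X)}

theorem IsIdeal.trClosed (hK : T.IsIdeal K) : T.TrClosed K :=
  hK.tr_mem

theorem mulIdl_le (hK : T.TrClosed K)
    (hmul : ∀ (A : GSet G) {a b : T.obj A}, a ∈ I A → b ∈ J A → a * b ∈ K A) (X : GSet G) :
    T.mulIdl I J X ≤ K X :=
  Ideal.span_le.mpr <| by
    rintro x ⟨A, p, a, b, ha, hb, rfl⟩
    exact hK p (hmul A ha hb)

theorem mulIdl_le_left (hI : T.TrClosed I) (X : GSet G) : T.mulIdl I J X ≤ I X :=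
  mulIdl_le hI (fun _ _ _ ha _ => Ideal.mul_mem_right _ _ ha) X

theorem mulIdl_le_right_of_le (hK : T.TrClosed K) (hJK : ∀ X, J X ≤ K X) (X : GSet G) :
    T.mulIdl I J X ≤ K X :=
  mulIdl_le hK (fun A _ _ _ hb => Ideal.mul_mem_left _ _ (hJK A hb)) X

theorem mul_le_mulIdl (X : GSet G) : I X * J X ≤ T.mulIdl I J X :=
  Ideal.mul_le.mpr fun a ha b hb =>
    Ideal.subset_span ⟨X, GSetHom.id X, a, b, ha, hb, (T.tr_id _).symm⟩

theorem mulIdl_eq_mul_of_sup_eq_top (hI : T.TrClosed I) (hJ : T.TrClosed J) (X : GSet G)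
    (hco : I X ⊔ J X = ⊤) : T.mulIdl I J X = I X * J X := by
  refine le_antisymm ?_ (mul_le_mulIdl X)
  rw [Ideal.mul_eq_inf_of_coprime hco]
  exact le_inf (mulIdl_le_left hI X) (mulIdl_le_right_of_le hJ (fun _ => le_rfl) X)

theorem prod_le_mulMulti (L : List (∀ X : GSet G, Ideal (T.obj X))) (X : GSet G) :
    (L.map fun K => K X).prod ≤ T.mulMulti L X := by
  induction L with
  | nil => exact le_top
  | cons K L ih =>
    rw [List.map_cons, List.prod_cons]
    exact (Ideal.mul_mono_right ih).trans (mul_le_mulIdl X)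

theorem mulMulti_le_of_mem {L : List (∀ X : GSet G, Ideal (T.obj X))}
    (hL : ∀ K ∈ L, T.TrClosed K) (hK : K ∈ L) (X : GSet G) : T.mulMulti L X ≤ K X := by
  induction L generalizing X with
  | nil => cases hK
  | cons K' L ih =>
    have hL' : ∀ K ∈ L, T.TrClosed K := fun K h => hL K (List.mem_cons_of_mem _ h)
    rcases List.mem_cons.mp hK with rfl | hK
    · exact mulIdl_le_left (hL K List.mem_cons_self) X
    · exact mulIdl_le_right_of_le (hL K (List.mem_cons_of_mem _ hK)) (ih hL' hK) X

theorem mulMulti_ofFn_eq_iInf {ℓ : ℕ} {Is : Fin ℓ → ∀ X : GSet G, Ideal (T.obj X)}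
    (hIs : ∀ i, T.TrClosed (Is i)) (X : GSet G)
    (hco : Pairwise fun i j => IsCoprime (Is i X) (Is j X)) :
    T.mulMulti (List.ofFn Is) X = ⨅ i, Is i X := by
  have hL : ∀ K ∈ List.ofFn Is, T.TrClosed K := fun K hK => by
    obtain ⟨i, rfl⟩ := (List.mem_ofFn' Is K).mp hK
    exact hIs i
  refine le_antisymm
    (le_iInf fun i => mulMulti_le_of_mem hL ((List.mem_ofFn' Is _).mpr ⟨i, rfl⟩) X) ?_
  have hprod := prod_le_mulMulti (List.ofFn Is) X
  rw [List.map_ofFn, List.prod_ofFn] at hprod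
  simpa [Ideal.prod_eq_iInf_of_pairwise_isCoprime fun i _ j _ hij => hco hij] using hprod

end TambaraFunctor

theorem coprime_mul_and_crt_general (G : Type) [Group G] (T : TambaraFunctor G)
    (I J : ∀ X : GSet G, Ideal (T.obj X)) (hI : T.IsIdeal I) (hJ : T.IsIdeal J)
    (hco : ∀ X : GSet G, I X ⊔ J X = ⊤) :
    (∀ X : GSet G, T.mulIdl I J X = I X * J X) ∧
    (∀ X : GSet G, T.mulIdl I J X = I X ⊓ J X) ∧
    (∀ (ℓ : ℕ) (Is : Fin ℓ → ∀ X : GSet G, Ideal (T.obj X)),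
      (∀ i, T.IsIdeal (Is i)) →
      (Pairwise fun i j => ∀ X : GSet G, Is i X ⊔ Is j X = ⊤) →
      ∀ X : GSet G,
        ∃ e : (T.obj X ⧸ T.mulMulti (List.ofFn Is) X) ≃+* (∀ i, T.obj X ⧸ Is i X),
          ∀ x : T.obj X, e (Ideal.Quotient.mk _ x) = fun i => Ideal.Quotient.mk _ x) := by
  have hmul X : T.mulIdl I J X = I X * J X :=
    TambaraFunctor.mulIdl_eq_mul_of_sup_eq_top hI.trClosed hJ.trClosed X (hco X)
  refine ⟨hmul, fun X => by rw [hmul X, Ideal.mul_eq_inf_of_coprime (hco X)], ?_⟩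
  intro ℓ Is hIs hpair X
  have hcop : Pairwise fun i j => IsCoprime (Is i X) (Is j X) := fun i j hij =>
    Ideal.isCoprime_iff_sup_eq.mpr (hpair hij X)
  have heq := TambaraFunctor.mulMulti_ofFn_eq_iInf (fun i => (hIs i).trClosed) X hcop
  exact ⟨(Ideal.quotEquivOfEq heq).trans (Ideal.quotientInfRingEquivPiQuotient _ hcop),
    fun _ => rfl⟩

/-- for coprime ideals, the product equals the intersection and is computed
levelwise by the ordinary product of ideals; the Chinese remainder theorem holds for
pairwise coprime ideals. -/
theorem coprime_mul_and_crt (G : Type) [Group G] [Finite G] (T : TambaraFunctor G)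
    (I J : ∀ X : GSet G, Ideal (T.obj X)) (hI : T.IsIdeal I) (hJ : T.IsIdeal J)
    (hco : ∀ X : GSet G, I X ⊔ J X = ⊤) :
    (∀ X : GSet G, T.mulIdl I J X = I X * J X) ∧
    (∀ X : GSet G, T.mulIdl I J X = I X ⊓ J X) ∧
    (∀ (ℓ : ℕ) (Is : Fin ℓ → ∀ X : GSet G, Ideal (T.obj X)),
      (∀ i, T.IsIdeal (Is i)) →
      (Pairwise fun i j => ∀ X : GSet G, Is i X ⊔ Is j X = ⊤) →
      ∀ X : GSet G,
        ∃ e : (T.obj X ⧸ T.mulMulti (List.ofFn Is) X) ≃+* (∀ i, T.obj X ⧸ Is i X),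
          ∀ x : T.obj X, e (Ideal.Quotient.mk _ x) = fun i => Ideal.Quotient.mk _ x) :=
  coprime_mul_and_crt_general G T I J hI hJ hco
end
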